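/- arXiv:1807.10674 — 6 statements merged into one kernel-verified Lean document; each statement's English description precedes it below -/
import Mathlib

section
/- For every a > 0 and λ ≥ 0, the supremum over ξ ≥ 0 of ξ^λ e^{a(ξ - ξ³)} is at most C_λ (e^a + a^{-λ/3}), where C_λ is a constant depending only on λ. -/
/-- For every `λ ≥ 0` there is a constant `C_λ > 0` such that for all `a > 0` and all
`ξ ≥ 0`, `ξ^λ e^{a(ξ - ξ³)} ≤ C_λ (e^a + a^{-λ/3})`. -/
theorem stmt0 (l : ℝ) (hl : 0 ≤ l) :
    ∃ C : ℝ, 0 < C ∧ ∀ a : ℝ, 0 < a → ∀ ξ : ℝ, 0 ≤ ξ →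
      ξ ^ l * Real.exp (a * (ξ - ξ ^ 3)) ≤ C * (Real.exp a + a ^ (-l / 3)) := by
  refine ⟨(2:ℝ) ^ l + Real.exp (l ^ 2 / 2 + 1), by positivity, ?_⟩
  intro a ha ξ hξ
  set C := (2:ℝ) ^ l + Real.exp (l ^ 2 / 2 + 1) with hC
  have hCpos : 0 < C := by positivity
  have hexp_pos : 0 < Real.exp a := Real.exp_pos a
  have hrpow_pos : 0 < a ^ (-l / 3) := Real.rpow_pos_of_pos ha _
  rcases le_or_gt ξ 2 with h2 | h2
  · have h1 : ξ ^ l ≤ (2:ℝ) ^ l := Real.rpow_le_rpow hξ h2 hl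
    have h2' : a * (ξ - ξ ^ 3) ≤ a := by
      have h3 : ξ - ξ ^ 3 ≤ 1 := by
        nlinarith [sq_nonneg (ξ - 1), sq_nonneg ξ, mul_nonneg hξ hξ]
      nlinarith
    have hmain := mul_le_mul h1 (Real.exp_le_exp.2 h2') (Real.exp_pos _).le
      (by positivity : (0:ℝ) ≤ (2:ℝ)^l)
    calc ξ ^ l * Real.exp (a * (ξ - ξ ^ 3)) ≤ (2:ℝ)^l * Real.exp a := hmain
      _ ≤ C * Real.exp a := by
          have h4 : (2:ℝ)^l ≤ C := by
            have := (Real.exp_pos (l^2/2+1)).le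
            rw [hC]; linarith
          exact mul_le_mul_of_nonneg_right h4 hexp_pos.le
      _ ≤ C * (Real.exp a + a ^ (-l/3)) := by nlinarith [mul_pos hCpos hrpow_pos]
  · set b := a ^ ((1:ℝ)/3) with hb
    have hbpos : 0 < b := Real.rpow_pos_of_pos ha _
    have hb3 : b ^ 3 = a := by
      rw [hb, ← Real.rpow_natCast (a ^ ((1:ℝ)/3)) 3, ← Real.rpow_mul ha.le]
      norm_num
    set t := b * ξ with ht
    have htnn : 0 ≤ t := mul_nonneg hbpos.le hξ
    have hstep1 : a * (ξ - ξ ^ 3) ≤ -(t ^ 3) / 2 := by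
      have ht3 : t ^ 3 = a * ξ ^ 3 := by rw [ht, mul_pow, hb3]
      rw [ht3]
      have hxx : ξ ≤ ξ ^ 3 / 2 := by
        have hsq : 4 < ξ ^ 2 := by nlinarith
        nlinarith [mul_lt_mul_of_pos_left hsq (show (0:ℝ) < ξ by linarith)]
      nlinarith
    have hkey : t ^ l * Real.exp (-(t ^ 3) / 2) ≤ Real.exp (l ^ 2 / 2 + 1) := by
      have h1 : t ^ l ≤ Real.exp (t * l) := by
        have ht' : t ≤ Real.exp t := by nlinarith [Real.add_one_le_exp t]
        calc t ^ l ≤ (Real.exp t) ^ l := Real.rpow_le_rpow htnn ht' hl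
          _ = Real.exp (t * l) := by
              rw [Real.rpow_def_of_pos (Real.exp_pos t), Real.log_exp]
      calc t ^ l * Real.exp (-(t^3)/2) ≤ Real.exp (t*l) * Real.exp (-(t^3)/2) :=
            mul_le_mul_of_nonneg_right h1 (Real.exp_pos _).le
        _ = Real.exp (t*l + -(t^3)/2) := (Real.exp_add _ _).symm
        _ ≤ Real.exp (l^2/2 + 1) := by
            apply Real.exp_le_exp.2
            nlinarith [sq_nonneg (t - l),
              mul_nonneg (by linarith : (0:ℝ) ≤ t + 1/3) (sq_nonneg (t - 2/3))]
    have hξl : ξ ^ l = a ^ (-l/3) * t ^ l := by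
      have htl : t ^ l = a ^ (l/3) * ξ ^ l := by
        rw [ht, Real.mul_rpow hbpos.le hξ, hb, ← Real.rpow_mul ha.le,
          show (1:ℝ)/3*l = l/3 by ring]
      have hal : (0:ℝ) < a ^ (l/3) := Real.rpow_pos_of_pos ha _
      have hneg : a ^ (-l/3) = (a ^ (l/3))⁻¹ := by
        rw [neg_div, ← Real.rpow_neg ha.le]
      rw [hneg, htl]
      field_simp
    calc ξ ^ l * Real.exp (a * (ξ - ξ ^ 3))
        ≤ ξ ^ l * Real.exp (-(t^3)/2) :=
          mul_le_mul_of_nonneg_left (Real.exp_le_exp.2 hstep1) (Real.rpow_nonneg hξ l)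
      _ = a ^ (-l/3) * (t ^ l * Real.exp (-(t^3)/2)) := by rw [hξl]; ring
      _ ≤ a ^ (-l/3) * Real.exp (l^2/2 + 1) :=
          mul_le_mul_of_nonneg_left hkey hrpow_pos.le
      _ ≤ C * a ^ (-l/3) := by
          have hle : Real.exp (l^2/2+1) ≤ C := by
            have h5 : (0:ℝ) < (2:ℝ)^l := by positivity
            rw [hC]; linarith
          nlinarith
      _ ≤ C * (Real.exp a + a ^ (-l/3)) := by
          have hpe := mul_pos hCpos hexp_pos
          have heq : C * (Real.exp a + a ^ (-l/3)) = C * Real.exp a + C * a ^ (-l/3) := by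
            ring
          rw [heq]
          exact le_add_of_nonneg_left hpe.le
end

section
/- Let μ > 0, t > 0 and λ ≥ 0. Then the essential supremum over ξ ∈ ℝ of |ξ|^λ e^{μ t (|ξ| - |ξ|³)} is at most C_λ (e^{μt} + (μt)^{-λ/3}) for a constant C_λ depending only on λ. -/
/-- `u^p ≤ p^p e^u` for nonnegative `u, p`. -/
lemma aux_rpow_le (p u : ℝ) (hp : 0 ≤ p) (hu : 0 ≤ u) :
    u ^ p ≤ p ^ p * Real.exp u := by
  rcases eq_or_lt_of_le hp with h | hp'
  · subst h
    simp [Real.rpow_zero]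
    exact hu
  · have h1 : u / p ≤ Real.exp (u / p) := by
      linarith [Real.add_one_le_exp (u / p)]
    have h2 : (u / p) ^ p ≤ (Real.exp (u / p)) ^ p :=
      Real.rpow_le_rpow (by positivity) h1 hp
    have h4 : u ^ p = (u / p) ^ p * p ^ p := by
      rw [← Real.mul_rpow (by positivity) hp]
      rw [div_mul_cancel₀ _ (ne_of_gt hp')]
    rw [h4]
    calc (u / p) ^ p * p ^ p ≤ Real.exp u * p ^ p := by
          apply mul_le_mul_of_nonneg_right (h2.trans_eq ?_) (Real.rpow_nonneg hp _)
          rw [← Real.exp_mul, div_mul_cancel₀ _ (ne_of_gt hp')]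
      _ = p ^ p * Real.exp u := mul_comm _ _

/-- For every `λ ≥ 0` there is a constant `C_λ > 0` such that for all `μ > 0`, `t > 0`
and all `ξ ∈ ℝ`, `|ξ|^λ e^{μt(|ξ| - |ξ|³)} ≤ C_λ (e^{μt} + (μt)^{-λ/3})`; in particular the
(essential) supremum over `ξ` of the left-hand side is bounded by the right-hand side. -/
theorem stmt1 (l : ℝ) (hl : 0 ≤ l) :
    ∃ C : ℝ, 0 < C ∧ ∀ μ t : ℝ, 0 < μ → 0 < t → ∀ ξ : ℝ,
      |ξ| ^ l * Real.exp (μ * t * (|ξ| - |ξ| ^ 3))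
        ≤ C * (Real.exp (μ * t) + (μ * t) ^ (-l / 3)) := by
  set p := l / 3 with hpdef
  have hp : 0 ≤ p := by positivity
  refine ⟨2 ^ l + (8/3 : ℝ) ^ p * p ^ p, by positivity, ?_⟩
  intro μ t hμ ht ξ
  set a := μ * t with hadef
  have ha : 0 < a := mul_pos hμ ht
  set x := |ξ| with hxdef
  have hx : 0 ≤ x := abs_nonneg ξ
  rcases le_total x 2 with hx2 | hx2
  · -- small x: exponent ≤ a, x^l ≤ 2^l
    have h1 : x ^ l ≤ 2 ^ l := Real.rpow_le_rpow hx hx2 hl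
    have h2 : Real.exp (a * (x - x ^ 3)) ≤ Real.exp a := by
      apply Real.exp_le_exp.2
      have hle : x - x ^ 3 ≤ 1 := by nlinarith [sq_nonneg (x - 1), sq_nonneg x]
      have := mul_le_mul_of_nonneg_left hle ha.le
      linarith
    calc x ^ l * Real.exp (a * (x - x ^ 3)) ≤ 2 ^ l * Real.exp a := by
          apply mul_le_mul h1 h2 (Real.exp_pos _).le (by positivity)
      _ ≤ (2 ^ l + (8/3 : ℝ) ^ p * p ^ p) * (Real.exp a + a ^ (-l / 3)) := by
          have h3 : (0:ℝ) < a ^ (-l / 3) := Real.rpow_pos_of_pos ha _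
          have h4 : (0:ℝ) ≤ (8/3 : ℝ) ^ p * p ^ p := by positivity
          nlinarith [Real.exp_pos a, Real.rpow_pos_of_pos (show (0:ℝ) < 2 by norm_num) l]
  · -- large x
    have hx0 : 0 < x := by linarith
    have hb : (0:ℝ) < 3 * a / 8 := by positivity
    set u := (3 * a / 8) * x ^ 3 with hudef
    have hu : 0 ≤ u := by positivity
    have key : x ^ l ≤ p ^ p * Real.exp u * ((3 * a / 8) ^ (-p)) := by
      have e0 : x ^ l = ((x ^ 3 : ℝ)) ^ p := by
        rw [← Real.rpow_natCast x 3, ← Real.rpow_mul hx]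
        congr 1
        rw [hpdef]; push_cast; ring
      have e1 : ((3 * a / 8) * x ^ 3) ^ p * (3 * a / 8) ^ (-p) = ((x ^ 3 : ℝ)) ^ p := by
        rw [Real.mul_rpow hb.le (by positivity), Real.rpow_neg hb.le,
          mul_comm ((3 * a / 8 : ℝ) ^ p), mul_assoc,
          mul_inv_cancel₀ (ne_of_gt (Real.rpow_pos_of_pos hb p)), mul_one]
      rw [e0, ← e1]
      exact mul_le_mul_of_nonneg_right (aux_rpow_le p u hp hu)
        (le_of_lt (Real.rpow_pos_of_pos hb _))
    have hexp : Real.exp u * Real.exp (a * (x - x ^ 3)) ≤ 1 := by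
      rw [← Real.exp_add]
      apply Real.exp_le_one_iff.2
      have e2 : u + a * (x - x ^ 3) = a * (x - (5/8) * x ^ 3) := by rw [hudef]; ring
      rw [e2]
      have h5 : x - (5/8) * x ^ 3 ≤ 0 := by nlinarith [sq_nonneg x]
      exact mul_nonpos_of_nonneg_of_nonpos ha.le h5
    have step : x ^ l * Real.exp (a * (x - x ^ 3))
        ≤ p ^ p * (3 * a / 8) ^ (-p) := by
      calc x ^ l * Real.exp (a * (x - x ^ 3))
          ≤ (p ^ p * Real.exp u * ((3 * a / 8) ^ (-p))) * Real.exp (a * (x - x ^ 3)) :=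
            mul_le_mul_of_nonneg_right key (Real.exp_pos _).le
        _ = (p ^ p * (3 * a / 8) ^ (-p)) * (Real.exp u * Real.exp (a * (x - x ^ 3))) := by ring
        _ ≤ (p ^ p * (3 * a / 8) ^ (-p)) * 1 :=
            mul_le_mul_of_nonneg_left hexp (by positivity)
        _ = p ^ p * (3 * a / 8) ^ (-p) := mul_one _
    have hsplit : (3 * a / 8 : ℝ) ^ (-p) = (8/3 : ℝ) ^ p * a ^ (-l / 3) := by
      have h38 : (3 * a / 8 : ℝ) = (8/3 : ℝ)⁻¹ * a := by norm_num; ring_nf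
      rw [h38, Real.mul_rpow (by norm_num) ha.le, Real.inv_rpow (by norm_num),
        ← Real.rpow_neg (by norm_num), neg_neg]
      congr 1
      rw [hpdef]; ring
    calc x ^ l * Real.exp (a * (x - x ^ 3)) ≤ p ^ p * (3 * a / 8) ^ (-p) := step
      _ = (8/3 : ℝ) ^ p * p ^ p * a ^ (-l / 3) := by rw [hsplit]; ring
      _ ≤ (2 ^ l + (8/3 : ℝ) ^ p * p ^ p) * (Real.exp a + a ^ (-l / 3)) := by
          have h3 : (0:ℝ) < a ^ (-l / 3) := Real.rpow_pos_of_pos ha _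
          have h4 : (0:ℝ) ≤ (8/3 : ℝ) ^ p * p ^ p := by positivity
          nlinarith [Real.exp_pos a, Real.rpow_pos_of_pos (show (0:ℝ) < 2 by norm_num) l]
end

section
/- For μ > 0, s ∈ ℝ, λ ≥ 0 and t > 0, the semigroup S(t) with Fourier multiplier e^{(iξ|ξ| + μ(|ξ|-|ξ|³))t} maps H^s(ℝ) into H^{s+λ}(ℝ) and satisfies ‖S(t)φ‖_{H^{s+λ}} ≤ C_λ (e^{μt} + (μt)^{-λ/3}) ‖φ‖_{H^s}, with C_λ depending only on λ. -/
open MeasureTheory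

lemma aux_rpow_le_exp (c : ℝ) (hc : 0 ≤ c) {u : ℝ} (hu : 0 ≤ u) :
    u ^ c ≤ (1 + (Nat.factorial (Nat.ceil c) : ℝ)) * Real.exp u := by
  have hfac : (1:ℝ) ≤ (Nat.factorial (Nat.ceil c) : ℝ) := by exact_mod_cast Nat.one_le_iff_ne_zero.2 (Nat.factorial_ne_zero _)
  have hexp : (1:ℝ) ≤ Real.exp u := Real.one_le_exp hu
  rcases le_total u 1 with h1 | h1
  · have : u ^ c ≤ 1 := Real.rpow_le_one hu h1 hc
    nlinarith
  · have h2 : u ^ c ≤ u ^ (Nat.ceil c : ℝ) :=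
      Real.rpow_le_rpow_of_exponent_le h1 (Nat.le_ceil c)
    have h3 : u ^ (Nat.ceil c : ℝ) = u ^ (Nat.ceil c) := Real.rpow_natCast u _
    have h4 : u ^ (Nat.ceil c) ≤ (Nat.factorial (Nat.ceil c) : ℝ) * Real.exp u := by
      have := Real.pow_div_factorial_le_exp (x := u) (le_trans zero_le_one h1) (Nat.ceil c)
      have hpos : (0:ℝ) < (Nat.factorial (Nat.ceil c) : ℝ) := by positivity
      calc u ^ (Nat.ceil c) = u ^ (Nat.ceil c) / (Nat.factorial (Nat.ceil c) : ℝ) * (Nat.factorial (Nat.ceil c) : ℝ) := by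
            field_simp
        _ ≤ Real.exp u * (Nat.factorial (Nat.ceil c) : ℝ) := by
            exact mul_le_mul_of_nonneg_right this hpos.le
        _ = (Nat.factorial (Nat.ceil c) : ℝ) * Real.exp u := by ring
    nlinarith


set_option maxHeartbeats 1000000 in
lemma aux_point (l : ℝ) (hl : 0 ≤ l) {τ r : ℝ} (hτ : 0 < τ) (hr : 0 ≤ r) :
    (1 + r ^ 2) ^ l * Real.exp (2 * τ * (r - r ^ 3)) ≤
      ((1 + 2 ^ l * (1 + (1 + (Nat.factorial (Nat.ceil (2 * l / 3)) : ℝ)) * Real.exp 2)) *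
        (Real.exp τ + τ ^ (-l / 3))) ^ 2 := by
  set c : ℝ := 2 * l / 3 with hc
  set M : ℝ := 1 + (Nat.factorial (Nat.ceil c) : ℝ) with hM
  have hM1 : (1:ℝ) ≤ M := by
    have h : (1:ℝ) ≤ (Nat.factorial (Nat.ceil c) : ℝ) := by
      exact_mod_cast Nat.one_le_iff_ne_zero.2 (Nat.factorial_ne_zero _)
    rw [hM]; linarith
  have hc0 : 0 ≤ c := by positivity
  have h2l : (1:ℝ) ≤ 2 ^ l := Real.one_le_rpow one_le_two hl
  have h2l0 : (0:ℝ) ≤ 2 ^ l := by linarith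
  have hτc : 0 ≤ τ ^ (-c) := Real.rpow_nonneg hτ.le _
  have hrl : 0 ≤ r ^ (2 * l) := Real.rpow_nonneg hr _
  -- step 1 : exp factor bound
  have step1 : Real.exp (2 * τ * (r - r ^ 3)) ≤ Real.exp (2 * τ) * Real.exp (-(τ * r ^ 3)) := by
    rw [← Real.exp_add]
    apply Real.exp_le_exp.2
    nlinarith [sq_nonneg (r - 1), hτ.le, mul_nonneg hτ.le (mul_nonneg hr (sq_nonneg (r-1)))]
  -- step 2 : polynomial weight bound
  have step2 : (1 + r ^ 2) ^ l ≤ 2 ^ l * (1 + r ^ (2 * l)) := by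
    rcases le_total r 1 with h1 | h1
    · calc (1 + r ^ 2) ^ l ≤ (2:ℝ) ^ l :=
            Real.rpow_le_rpow (by positivity) (by nlinarith) hl
        _ ≤ 2 ^ l * (1 + r ^ (2 * l)) := le_mul_of_one_le_right h2l0 (by linarith)
    · have hb : (1 + r ^ 2) ≤ 2 * r ^ 2 := by nlinarith
      have h5 : (1 + r ^ 2) ^ l ≤ (2 * r ^ 2 : ℝ) ^ l :=
        Real.rpow_le_rpow (by positivity) hb hl
      have he : (2 * r ^ 2 : ℝ) ^ l = 2 ^ l * r ^ (2 * l) := by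
        rw [Real.mul_rpow (by norm_num) (by positivity), ← Real.rpow_natCast r 2,
          ← Real.rpow_mul hr]
        try norm_num
      calc (1 + r ^ 2) ^ l ≤ 2 ^ l * r ^ (2 * l) := he ▸ h5
        _ ≤ 2 ^ l * (1 + r ^ (2 * l)) :=
            mul_le_mul_of_nonneg_left (by linarith) h2l0
  -- step 3 : r^(2l) exp(-τ r³) ≤ M τ^(-c)
  have step3 : r ^ (2 * l) * Real.exp (-(τ * r ^ 3)) ≤ M * τ ^ (-c) := by
    set u : ℝ := τ * r ^ 3 with hu
    have hu0 : 0 ≤ u := by positivity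
    have hru : r ^ (2 * l) = u ^ c * τ ^ (-c) := by
      have h3 : r ^ 3 = u / τ := by field_simp [hu]; rw [hu]; ring
      have h4 : r ^ (2 * l) = (r ^ 3 : ℝ) ^ c := by
        rw [← Real.rpow_natCast r 3, ← Real.rpow_mul hr]
        congr 1
        push_cast
        rw [hc]; ring
      rw [h4, h3, Real.div_rpow hu0 hτ.le, Real.rpow_neg hτ.le, div_eq_mul_inv]
    have haux : u ^ c ≤ M * Real.exp u := aux_rpow_le_exp c hc0 hu0
    have hee : Real.exp u * Real.exp (-u) = 1 := by rw [← Real.exp_add]; simp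
    calc r ^ (2 * l) * Real.exp (-(τ * r ^ 3))
        = u ^ c * Real.exp (-u) * τ ^ (-c) := by rw [hru]; ring
      _ ≤ M * Real.exp u * Real.exp (-u) * τ ^ (-c) := by
          apply mul_le_mul_of_nonneg_right _ hτc
          exact mul_le_mul_of_nonneg_right haux (Real.exp_pos _).le
      _ = M * (Real.exp u * Real.exp (-u)) * τ ^ (-c) := by ring
      _ = M * τ ^ (-c) := by rw [hee]; ring
  -- step 4
  have step4 : Real.exp (2 * τ) * τ ^ (-c) ≤ Real.exp 2 * (Real.exp (2 * τ) + τ ^ (-c)) := by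
    have he2 : (1:ℝ) ≤ Real.exp 2 := Real.one_le_exp (by norm_num)
    rcases le_total τ 1 with h1 | h1
    · have h5 : Real.exp (2 * τ) ≤ Real.exp 2 := Real.exp_le_exp.2 (by linarith)
      nlinarith [Real.exp_pos (2 * τ)]
    · have h5 : τ ^ (-c) ≤ 1 := Real.rpow_le_one_of_one_le_of_nonpos h1 (by linarith)
      nlinarith [Real.exp_pos (2 * τ)]
  -- cross-term bound
  have hXY : Real.exp (2 * τ) + τ ^ (-c) ≤ (Real.exp τ + τ ^ (-l / 3)) ^ 2 := by
    have h1 : Real.exp (2 * τ) = Real.exp τ ^ 2 := by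
      rw [← Real.exp_nat_mul]; norm_num [mul_comm]
    have h2 : τ ^ (-c) = (τ ^ (-l / 3)) ^ 2 := by
      rw [← Real.rpow_natCast (τ ^ (-l / 3)) 2, ← Real.rpow_mul hτ.le]
      congr 1
      push_cast
      rw [hc]; ring
    have h3 : 0 ≤ Real.exp τ * τ ^ (-l/3) :=
      mul_nonneg (Real.exp_pos _).le (Real.rpow_nonneg hτ.le _)
    nlinarith
  set A : ℝ := 2 ^ l * (1 + M * Real.exp 2) with hA
  have he2 : (1:ℝ) ≤ Real.exp 2 := Real.one_le_exp (by norm_num)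
  have hA1 : 1 ≤ A := by
    have h6 : (1:ℝ) ≤ 1 + M * Real.exp 2 := by nlinarith
    calc (1:ℝ) = 1 * 1 := by ring
      _ ≤ 2 ^ l * (1 + M * Real.exp 2) := mul_le_mul h2l h6 (by norm_num) h2l0
  have main : (1 + r ^ 2) ^ l * Real.exp (2 * τ * (r - r ^ 3)) ≤
      A * (Real.exp (2 * τ) + τ ^ (-c)) := by
    calc (1 + r ^ 2) ^ l * Real.exp (2 * τ * (r - r ^ 3))
        ≤ (2 ^ l * (1 + r ^ (2 * l))) * (Real.exp (2 * τ) * Real.exp (-(τ * r ^ 3))) := by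
          apply mul_le_mul step2 step1 (Real.exp_pos _).le
          exact mul_nonneg h2l0 (by linarith)
      _ = 2 ^ l * (Real.exp (2 * τ) * Real.exp (-(τ * r ^ 3))
            + Real.exp (2 * τ) * (r ^ (2 * l) * Real.exp (-(τ * r ^ 3)))) := by ring
      _ ≤ 2 ^ l * (Real.exp (2 * τ) + Real.exp (2 * τ) * (M * τ ^ (-c))) := by
          apply mul_le_mul_of_nonneg_left _ h2l0
          have hem : Real.exp (-(τ * r ^ 3)) ≤ 1 := Real.exp_le_one_iff.2 (neg_nonpos.2 (by positivity))
          have e1 : Real.exp (2 * τ) * Real.exp (-(τ * r ^ 3)) ≤ Real.exp (2 * τ) := by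
            nlinarith [Real.exp_pos (2 * τ)]
          have e2 : Real.exp (2 * τ) * (r ^ (2 * l) * Real.exp (-(τ * r ^ 3)))
              ≤ Real.exp (2 * τ) * (M * τ ^ (-c)) :=
            mul_le_mul_of_nonneg_left step3 (Real.exp_pos _).le
          linarith
      _ ≤ A * (Real.exp (2 * τ) + τ ^ (-c)) := by
          have hMe : Real.exp (2 * τ) * (M * τ ^ (-c))
              ≤ M * Real.exp 2 * (Real.exp (2 * τ) + τ ^ (-c)) := by
            calc Real.exp (2 * τ) * (M * τ ^ (-c))
                = M * (Real.exp (2 * τ) * τ ^ (-c)) := by ring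
              _ ≤ M * (Real.exp 2 * (Real.exp (2 * τ) + τ ^ (-c))) :=
                  mul_le_mul_of_nonneg_left step4 (by linarith)
              _ = M * Real.exp 2 * (Real.exp (2 * τ) + τ ^ (-c)) := by ring
          have hin : Real.exp (2 * τ) + Real.exp (2 * τ) * (M * τ ^ (-c))
              ≤ (1 + M * Real.exp 2) * (Real.exp (2 * τ) + τ ^ (-c)) := by
            calc Real.exp (2 * τ) + Real.exp (2 * τ) * (M * τ ^ (-c))
                ≤ (Real.exp (2 * τ) + τ ^ (-c))
                  + M * Real.exp 2 * (Real.exp (2 * τ) + τ ^ (-c)) := by linarith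
              _ = (1 + M * Real.exp 2) * (Real.exp (2 * τ) + τ ^ (-c)) := by ring
          calc 2 ^ l * (Real.exp (2 * τ) + Real.exp (2 * τ) * (M * τ ^ (-c)))
              ≤ 2 ^ l * ((1 + M * Real.exp 2) * (Real.exp (2 * τ) + τ ^ (-c))) :=
                mul_le_mul_of_nonneg_left hin h2l0
            _ = A * (Real.exp (2 * τ) + τ ^ (-c)) := by rw [hA]; ring
  have hsum2 : 0 ≤ (Real.exp τ + τ ^ (-l / 3)) ^ 2 := sq_nonneg _
  have hAA : A ≤ (1 + A) ^ 2 := by nlinarith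
  calc (1 + r ^ 2) ^ l * Real.exp (2 * τ * (r - r ^ 3))
      ≤ A * (Real.exp (2 * τ) + τ ^ (-c)) := main
    _ ≤ A * (Real.exp τ + τ ^ (-l / 3)) ^ 2 :=
        mul_le_mul_of_nonneg_left hXY (by linarith)
    _ ≤ (1 + A) ^ 2 * (Real.exp τ + τ ^ (-l / 3)) ^ 2 :=
        mul_le_mul_of_nonneg_right hAA hsum2
    _ = ((1 + A) * (Real.exp τ + τ ^ (-l / 3))) ^ 2 := by ring

set_option maxHeartbeats 1000000 in
/-- For every `λ ≥ 0` there is `C_λ > 0` such that for all `μ > 0`, `s ∈ ℝ`, `t > 0` and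
`φ ∈ H^s(ℝ)`, the npBO semigroup `S(t)` (Fourier multiplier `e^{(iξ|ξ|+μ(|ξ|-|ξ|³))t}`)
maps `H^s` into `H^{s+λ}` with `‖S(t)φ‖_{H^{s+λ}} ≤ C_λ (e^{μt} + (μt)^{-λ/3}) ‖φ‖_{H^s}`. -/
theorem stmt4 (l : ℝ) (hl : 0 ≤ l) :
    ∃ C : ℝ, 0 < C ∧ ∀ (μ s : ℝ), 0 < μ → ∀ t : ℝ, 0 < t → ∀ φ : ℝ → ℂ,
      Integrable (fun ξ : ℝ => (1 + ξ ^ 2) ^ s * ‖FourierTransform.fourier φ ξ‖ ^ 2) →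
      (∫ ξ : ℝ, (1 + ξ ^ 2) ^ (s + l) *
          ‖Complex.exp ((Complex.I * ((ξ * |ξ| : ℝ) : ℂ) + ((μ * (|ξ| - |ξ| ^ 3) : ℝ) : ℂ))
                * (t : ℂ))
            * FourierTransform.fourier φ ξ‖ ^ 2) ^ (1/2 : ℝ)
        ≤ C * (Real.exp (μ * t) + (μ * t) ^ (-l / 3))
          * (∫ ξ : ℝ, (1 + ξ ^ 2) ^ s * ‖FourierTransform.fourier φ ξ‖ ^ 2) ^ (1/2 : ℝ) := by
  refine ⟨1 + 2 ^ l * (1 + (1 + (Nat.factorial (Nat.ceil (2 * l / 3)) : ℝ)) * Real.exp 2),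
    by positivity, ?_⟩
  set C : ℝ := 1 + 2 ^ l * (1 + (1 + (Nat.factorial (Nat.ceil (2 * l / 3)) : ℝ)) * Real.exp 2)
    with hC
  have hC0 : 0 < C := by positivity
  intro μ s hμ t ht φ hg
  have hτ : 0 < μ * t := mul_pos hμ ht
  set τ : ℝ := μ * t with hτdef
  set K : ℝ := C * (Real.exp τ + τ ^ (-l / 3)) with hK
  have hK0 : 0 < K := by
    apply mul_pos hC0
    have := Real.rpow_nonneg hτ.le (-l/3)
    nlinarith [Real.exp_pos τ]
  set g : ℝ → ℝ := fun ξ => (1 + ξ ^ 2) ^ s * ‖FourierTransform.fourier φ ξ‖ ^ 2 with hgdef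
  have hg0 : ∀ ξ, 0 ≤ g ξ := fun ξ =>
    mul_nonneg (Real.rpow_nonneg (by positivity) _) (by positivity)
  set h : ℝ → ℝ := fun ξ => (1 + ξ ^ 2) ^ l * Real.exp (2 * τ * (|ξ| - |ξ| ^ 3)) with hhdef
  have hh0 : ∀ ξ, 0 ≤ h ξ := fun ξ =>
    mul_nonneg (Real.rpow_nonneg (by positivity) _) (Real.exp_pos _).le
  -- rewrite the target integrand
  have hfeq : ∀ ξ : ℝ, (1 + ξ ^ 2) ^ (s + l) *
      ‖Complex.exp ((Complex.I * ((ξ * |ξ| : ℝ) : ℂ) + ((μ * (|ξ| - |ξ| ^ 3) : ℝ) : ℂ))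
          * (t : ℂ)) * FourierTransform.fourier φ ξ‖ ^ 2 = h ξ * g ξ := by
    intro ξ
    have hre : ‖Complex.exp ((Complex.I * ((ξ * |ξ| : ℝ) : ℂ) + ((μ * (|ξ| - |ξ| ^ 3) : ℝ) : ℂ))
        * (t : ℂ))‖ = Real.exp (μ * (|ξ| - |ξ| ^ 3) * t) := by
      rw [Complex.norm_exp]
      congr 1
      simp [Complex.add_re, Complex.mul_re, Complex.I_re, Complex.I_im, Complex.ofReal_re, Complex.ofReal_im, ← Complex.ofReal_pow]
    have hsq : Real.exp (μ * (|ξ| - |ξ| ^ 3) * t) ^ 2 = Real.exp (2 * τ * (|ξ| - |ξ| ^ 3)) := by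
      rw [sq, ← Real.exp_add]
      congr 1
      rw [hτdef]; ring
    have hsl : ((1 : ℝ) + ξ ^ 2) ^ (s + l) = (1 + ξ ^ 2) ^ s * (1 + ξ ^ 2) ^ l :=
      Real.rpow_add (by positivity) s l
    rw [norm_mul, mul_pow, hre, hsq, hsl, hhdef, hgdef]
    ring
  have hpt : ∀ ξ : ℝ, h ξ * g ξ ≤ K ^ 2 * g ξ := by
    intro ξ
    apply mul_le_mul_of_nonneg_right _ (hg0 ξ)
    have := aux_point l hl hτ (abs_nonneg ξ)
    rw [sq_abs] at this
    rw [hhdef, hK, hC]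
    exact this
  -- measurability and integrability
  have hcont : Continuous h := by
    apply Continuous.mul
    · exact Continuous.rpow_const (by continuity) (fun x => Or.inr hl)
    · exact Real.continuous_exp.comp (by continuity)
  have hmeas : AEStronglyMeasurable (fun ξ => h ξ * g ξ) volume :=
    hcont.aestronglyMeasurable.mul hg.aestronglyMeasurable
  have hKg : Integrable (fun ξ => K ^ 2 * g ξ) := hg.const_mul _
  have hf : Integrable (fun ξ => h ξ * g ξ) := by
    apply hKg.mono' hmeas
    filter_upwards with ξ
    rw [Real.norm_eq_abs, abs_of_nonneg (mul_nonneg (hh0 ξ) (hg0 ξ))]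
    exact hpt ξ
  have hint : (∫ ξ : ℝ, h ξ * g ξ) ≤ K ^ 2 * ∫ ξ : ℝ, g ξ := by
    rw [← integral_const_mul]
    exact integral_mono hf hKg hpt
  have hIg0 : 0 ≤ ∫ ξ : ℝ, g ξ := integral_nonneg hg0
  have hIf0 : 0 ≤ ∫ ξ : ℝ, h ξ * g ξ := integral_nonneg fun ξ => mul_nonneg (hh0 ξ) (hg0 ξ)
  calc (∫ ξ : ℝ, (1 + ξ ^ 2) ^ (s + l) *
          ‖Complex.exp ((Complex.I * ((ξ * |ξ| : ℝ) : ℂ) + ((μ * (|ξ| - |ξ| ^ 3) : ℝ) : ℂ))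
                * (t : ℂ)) * FourierTransform.fourier φ ξ‖ ^ 2) ^ (1/2 : ℝ)
      = (∫ ξ : ℝ, h ξ * g ξ) ^ (1/2 : ℝ) := by
        congr 1
        exact integral_congr_ae (Filter.Eventually.of_forall hfeq)
    _ ≤ (K ^ 2 * ∫ ξ : ℝ, g ξ) ^ (1/2 : ℝ) :=
        Real.rpow_le_rpow hIf0 hint (by norm_num)
    _ = K * (∫ ξ : ℝ, g ξ) ^ (1/2 : ℝ) := by
        rw [Real.mul_rpow (sq_nonneg K) hIg0]
        congr 1
        rw [← Real.rpow_natCast K 2, ← Real.rpow_mul hK0.le]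
        norm_num
    _ = C * (Real.exp τ + τ ^ (-l / 3)) * (∫ ξ : ℝ, g ξ) ^ (1/2 : ℝ) := by rw [hK]
end

section
/- For every s ≥ 0 and t > 0, ∫_0^∞ ξ^{2(s+1)} e^{2t(ξ-ξ³)} dξ ≤ c_s (e^{2t} + Γ(2s+1) · 3^{-1} t^{-(1+2s/3)}), where Γ is the Gamma function and c_s depends only on s. -/
open MeasureTheory Real Set

set_option maxHeartbeats 1000000 in
/-- For every `s ≥ 0` there is `c_s > 0` such that for every `t > 0`,
`∫_0^∞ ξ^{2(s+1)} e^{2t(ξ-ξ³)} dξ ≤ c_s (e^{2t} + Γ(2s+1)·3⁻¹·t^{-(1+2s/3)})`. -/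
theorem stmt6 (s : ℝ) (hs : 0 ≤ s) :
    ∃ c : ℝ, 0 < c ∧ ∀ t : ℝ, 0 < t →
      (∫ ξ in Set.Ioi (0:ℝ), ξ ^ (2 * (s + 1)) * Real.exp (2 * t * (ξ - ξ ^ 3)))
        ≤ c * (Real.exp (2 * t) + Real.Gamma (2 * s + 1) * 3⁻¹ * t ^ (-(1 + 2 * s / 3))) := by
  have hΓ1 : 0 < Real.Gamma ((2 * (s + 1) + 1) / 3) := Real.Gamma_pos_of_pos (by linarith)
  have hΓ2 : 0 < Real.Gamma (2 * s + 1) := Real.Gamma_pos_of_pos (by linarith)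
  have hq : (0:ℝ) ≤ 2 * (s + 1) := by linarith
  refine ⟨(2 * 2 ^ (2 * (s + 1)) + 1) + Real.Gamma ((2 * (s + 1) + 1) / 3) / Real.Gamma (2 * s + 1),
    by positivity, fun t ht => ?_⟩
  set f : ℝ → ℝ := fun ξ => ξ ^ (2 * (s + 1)) * Real.exp (2 * t * (ξ - ξ ^ 3)) with hf
  set g : ℝ → ℝ := fun ξ => ξ ^ (2 * (s + 1)) * Real.exp (-t * ξ ^ (3:ℝ)) with hg
  have hmeas : Measurable f := by fun_prop
  have hg_int : IntegrableOn g (Ioi 0) :=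
    integrableOn_rpow_mul_exp_neg_mul_rpow (by linarith) (by norm_num) ht
  -- pointwise bound on Ioi 2 : f ≤ g
  have hfg : ∀ x : ℝ, 2 ≤ x → f x ≤ g x := by
    intro x hx
    have hx0 : (0:ℝ) < x := by linarith
    apply mul_le_mul_of_nonneg_left _ (rpow_nonneg hx0.le _)
    rw [Real.exp_le_exp]
    have h3 : x ^ (3:ℝ) = x ^ (3:ℕ) := by
      rw [← Real.rpow_natCast x 3]; norm_num
    rw [h3]
    have h1 : 2 * x ≤ x ^ 3 := by nlinarith [sq_nonneg x]
    nlinarith [mul_le_mul_of_nonneg_left h1 ht.le]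
  have hf_nonneg : ∀ x : ℝ, 0 < x → 0 ≤ f x := fun x hx =>
    mul_nonneg (Real.rpow_nonneg hx.le _) (Real.exp_nonneg _)
  have hf_int2 : IntegrableOn f (Ioi 2) := by
    refine Integrable.mono' (hg_int.mono_set (Ioi_subset_Ioi (by norm_num)))
      hmeas.aestronglyMeasurable.restrict ?_
    refine (ae_restrict_iff' measurableSet_Ioi).2 (Filter.Eventually.of_forall fun x hx => ?_)
    have hx2 : (2:ℝ) < x := hx
    rw [Real.norm_eq_abs, abs_of_nonneg (hf_nonneg x (by linarith))]
    exact hfg x hx2.le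
  have hf_int1 : IntegrableOn f (Ioc 0 2) := by
    have hconst : IntegrableOn (fun _ : ℝ => 2 ^ (2 * (s + 1)) * Real.exp (2 * t))
        (Ioc (0:ℝ) 2) := integrableOn_const (by simp) enorm_ne_top
    refine Integrable.mono' hconst hmeas.aestronglyMeasurable.restrict ?_
    refine (ae_restrict_iff' measurableSet_Ioc).2 (Filter.Eventually.of_forall fun x hx => ?_)
    rw [Real.norm_eq_abs, abs_of_nonneg (hf_nonneg x hx.1)]
    calc f x ≤ 2 ^ (2 * (s + 1)) * Real.exp (2 * t * (x - x ^ 3)) := by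
          apply mul_le_mul_of_nonneg_right _ (Real.exp_pos _).le
          exact Real.rpow_le_rpow hx.1.le hx.2 hq
      _ ≤ 2 ^ (2 * (s + 1)) * Real.exp (2 * t) := by
          apply mul_le_mul_of_nonneg_left _ (by positivity)
          rw [Real.exp_le_exp]
          have hx0 := hx.1
          have h1 : x - x ^ 3 ≤ 1 := by
            rcases le_or_gt x 1 with h | h
            · nlinarith [pow_nonneg hx0.le 3]
            · nlinarith [sq_nonneg x, mul_pos hx0 hx0]
          nlinarith [mul_le_mul_of_nonneg_left h1 (by linarith : (0:ℝ) ≤ 2 * t)]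
  -- split the integral
  have hsplit : (∫ ξ in Ioi (0:ℝ), f ξ) = (∫ ξ in Ioc (0:ℝ) 2, f ξ) + ∫ ξ in Ioi (2:ℝ), f ξ := by
    rw [← setIntegral_union (Ioc_disjoint_Ioi le_rfl) measurableSet_Ioi hf_int1 hf_int2,
      Ioc_union_Ioi_eq_Ioi (by norm_num : (0:ℝ) ≤ 2)]
  -- bound on (0,2]
  have hb1 : (∫ ξ in Ioc (0:ℝ) 2, f ξ) ≤ 2 * (2 ^ (2 * (s + 1)) * Real.exp (2 * t)) := by
    have : (∫ ξ in Ioc (0:ℝ) 2, f ξ) ≤ ∫ _ in Ioc (0:ℝ) 2, 2 ^ (2 * (s + 1)) * Real.exp (2 * t) := by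
      refine setIntegral_mono_on hf_int1 (integrableOn_const (by simp) enorm_ne_top)
        measurableSet_Ioc fun x hx => ?_
      calc f x ≤ 2 ^ (2 * (s + 1)) * Real.exp (2 * t * (x - x ^ 3)) := by
            apply mul_le_mul_of_nonneg_right _ (Real.exp_pos _).le
            exact Real.rpow_le_rpow hx.1.le hx.2 hq
        _ ≤ 2 ^ (2 * (s + 1)) * Real.exp (2 * t) := by
            apply mul_le_mul_of_nonneg_left _ (by positivity)
            rw [Real.exp_le_exp]
            have hx0 := hx.1
            have h1 : x - x ^ 3 ≤ 1 := by
              rcases le_or_gt x 1 with h | h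
              · nlinarith [pow_nonneg hx0.le 3]
              · nlinarith [sq_nonneg x, mul_pos hx0 hx0]
            nlinarith [mul_le_mul_of_nonneg_left h1 (by linarith : (0:ℝ) ≤ 2 * t)]
    refine this.trans ?_
    rw [setIntegral_const]
    simp [Real.volume_Ioc]
  -- bound on (2,∞)
  have hb2 : (∫ ξ in Ioi (2:ℝ), f ξ) ≤
      t ^ (-(2 * (s + 1) + 1) / 3) * (1 / 3) * Real.Gamma ((2 * (s + 1) + 1) / 3) := by
    have h1 : (∫ ξ in Ioi (2:ℝ), f ξ) ≤ ∫ ξ in Ioi (2:ℝ), g ξ :=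
      setIntegral_mono_on hf_int2 (hg_int.mono_set (Ioi_subset_Ioi (by norm_num)))
        measurableSet_Ioi fun x hx => hfg x (le_of_lt hx)
    have h2 : (∫ ξ in Ioi (2:ℝ), g ξ) ≤ ∫ ξ in Ioi (0:ℝ), g ξ := by
      refine setIntegral_mono_set hg_int ?_ ?_
      · refine (ae_restrict_iff' measurableSet_Ioi).2 (Filter.Eventually.of_forall fun x hx => ?_)
        have hx0 : (0:ℝ) < x := hx
        exact mul_nonneg (Real.rpow_nonneg hx0.le _) (Real.exp_nonneg _)
      · exact Filter.Eventually.of_forall (fun x hx => lt_trans (by norm_num) hx)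
    have h3 : (∫ ξ in Ioi (0:ℝ), g ξ) =
        t ^ (-(2 * (s + 1) + 1) / 3) * (1 / 3) * Real.Gamma ((2 * (s + 1) + 1) / 3) :=
      integral_rpow_mul_exp_neg_mul_rpow (by norm_num) (by linarith) ht
    linarith
  -- combine
  have hexp : t ^ (-(2 * (s + 1) + 1) / 3) = t ^ (-(1 + 2 * s / 3)) := by
    congr 1; ring
  have hE : (0:ℝ) < Real.exp (2 * t) := Real.exp_pos _
  have hT : (0:ℝ) < t ^ (-(1 + 2 * s / 3)) := Real.rpow_pos_of_pos ht _
  have hpow : (0:ℝ) < (2:ℝ) ^ (2 * (s + 1)) := by positivity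
  have hBG : Real.Gamma ((2 * (s + 1) + 1) / 3) / Real.Gamma (2 * s + 1) * Real.Gamma (2 * s + 1)
      = Real.Gamma ((2 * (s + 1) + 1) / 3) := div_mul_cancel₀ _ hΓ2.ne'
  rw [hf] at hsplit ⊢
  rw [hsplit]
  rw [hexp] at hb2
  have hBpos : 0 < Real.Gamma ((2 * (s + 1) + 1) / 3) / Real.Gamma (2 * s + 1) := by positivity
  nlinarith [hb1, hb2, mul_pos hE hBpos, mul_pos hT (mul_pos hΓ2 hpow),
    mul_pos hE hpow, mul_pos hT hΓ2]
end

section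
/- Let s ∈ (-3/2, 0), μ > 0 and t > 0. Then ‖ |ξ|^{1+s} e^{μ(|ξ|-|ξ|³)t} ‖_{L²(ℝ)} ≤ C_s e^{(2√2/√27) μ t} t^{-(2s+3)/6}, where C_s depends only on s and μ. -/
open MeasureTheory

private lemma integrable_comp_abs' {F : ℝ → ℝ} (hF : IntegrableOn F (Set.Ioi 0)) :
    Integrable (fun x : ℝ => F |x|) := by
  have int_Ioi : IntegrableOn (fun x : ℝ => F |x|) (Set.Ioi 0) := by
    refine hF.congr_fun (fun x hx => ?_) measurableSet_Ioi
    rw [abs_of_pos (Set.mem_Ioi.mp hx)]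
  have int_Iic : IntegrableOn (fun x : ℝ ↦ F |x|) (Set.Iic 0) := by
    rw [← Measure.map_neg_eq_self (volume : Measure ℝ)]
    have m : MeasurableEmbedding fun x : ℝ => -x := (Homeomorph.neg ℝ).measurableEmbedding
    rw [m.integrableOn_map_iff]
    simp_rw [Function.comp_def, abs_neg, Set.neg_preimage, Set.neg_Iic, neg_zero]
    exact Iff.mpr integrableOn_Ici_iff_integrableOn_Ioi int_Ioi
  rw [← integrableOn_univ, ← Set.Iic_union_Ioi (a := (0:ℝ))]
  exact int_Iic.union int_Ioi

private lemma sqrt_half_pow_sq {x : ℝ} (hx : 0 ≤ x) : (x ^ (1/2 : ℝ)) ^ 2 = x := by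
  rw [← Real.rpow_natCast (x ^ (1/2 : ℝ)) 2, ← Real.rpow_mul hx]
  norm_num

private lemma exp_pow_two (y : ℝ) : (Real.exp y) ^ 2 = Real.exp (2 * y) := by
  rw [sq, ← Real.exp_add]; ring_nf

/-- For `s ∈ (-3/2, 0)` and `μ > 0` there is `C = C(s,μ) > 0` such that for all `t > 0`,
`‖ |ξ|^{1+s} e^{μ(|ξ|-|ξ|³)t} ‖_{L²(ℝ)} ≤ C e^{(2√2/√27) μ t} t^{-(2s+3)/6}`. -/
theorem stmt9 (s μ : ℝ) (hs : s ∈ Set.Ioo (-(3:ℝ)/2) 0) (hμ : 0 < μ) :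
    ∃ C : ℝ, 0 < C ∧ ∀ t : ℝ, 0 < t →
      (∫ ξ : ℝ, (|ξ| ^ (1 + s) * Real.exp (μ * (|ξ| - |ξ| ^ 3) * t)) ^ 2) ^ (1/2 : ℝ)
        ≤ C * Real.exp (2 * Real.sqrt 2 / Real.sqrt 27 * μ * t) * t ^ (-(2 * s + 3) / 6) := by
  obtain ⟨hs1, hs2⟩ := hs
  set a : ℝ := Real.sqrt (2/3) with ha_def
  have ha0 : 0 ≤ a := Real.sqrt_nonneg _
  have ha2 : a ^ 2 = 2/3 := Real.sq_sqrt (by norm_num)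
  have ha3 : a ^ 3 = 2/3 * a := by
    rw [pow_succ, ha2]
  -- identify the constant 2√2/√27 = 2a/3
  have hsqrt3 : (0:ℝ) < Real.sqrt 3 := Real.sqrt_pos.mpr (by norm_num)
  have h27 : Real.sqrt 27 = 3 * Real.sqrt 3 := by
    rw [show (27:ℝ) = 9 * 3 by norm_num, Real.sqrt_mul (by norm_num),
      show (9:ℝ) = 3 ^ 2 by norm_num, Real.sqrt_sq (by norm_num)]
  have haq : a = Real.sqrt 2 / Real.sqrt 3 := Real.sqrt_div (by norm_num) 3
  have hK : 2 * Real.sqrt 2 / Real.sqrt 27 = 2 * a / 3 := by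
    rw [h27, haq]
    field_simp
  -- key pointwise inequality: x - x³/2 ≤ 2a/3 for x ≥ 0
  have hkey : ∀ x : ℝ, 0 ≤ x → x - x ^ 3 / 2 ≤ 2 * a / 3 := by
    intro x hx
    have h := mul_nonneg (sq_nonneg (x - a)) (by linarith : (0:ℝ) ≤ x + 2 * a)
    nlinarith [h, ha2, ha3]
  have hΓarg : 0 < (2 * s + 3) / 3 := by linarith
  have hΓ : 0 < Real.Gamma ((2 * s + 3) / 3) := Real.Gamma_pos_of_pos hΓarg
  have hμr : 0 < μ ^ (-(2 * s + 3) / 3) := Real.rpow_pos_of_pos hμ _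
  set C : ℝ := (2 * (1/3) * Real.Gamma ((2 * s + 3) / 3) * μ ^ (-(2 * s + 3) / 3)) ^ (1/2 : ℝ)
    with hC_def
  have hCin : 0 < 2 * (1/3) * Real.Gamma ((2 * s + 3) / 3) * μ ^ (-(2 * s + 3) / 3) := by
    positivity
  have hC : 0 < C := Real.rpow_pos_of_pos hCin _
  refine ⟨C, hC, fun t ht => ?_⟩
  set b : ℝ := μ * t with hb_def
  have hb : 0 < b := mul_pos hμ ht
  -- the dominating function
  set F : ℝ → ℝ := fun x => x ^ (2 + 2 * s) * Real.exp (-b * x ^ (3:ℝ)) with hF_def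
  have hFint : IntegrableOn F (Set.Ioi 0) :=
    integrableOn_rpow_mul_exp_neg_mul_rpow (by linarith) (by norm_num) hb
  set E2 : ℝ := Real.exp (2 * (2 * a / 3 * μ * t)) with hE2_def
  -- pointwise bound
  have hpt : ∀ ξ : ℝ, (|ξ| ^ (1 + s) * Real.exp (μ * (|ξ| - |ξ| ^ 3) * t)) ^ 2
      ≤ E2 * F |ξ| := by
    intro ξ
    set x : ℝ := |ξ| with hx_def
    have hx : 0 ≤ x := abs_nonneg ξ
    have hxp : (x ^ (1 + s)) ^ 2 = x ^ (2 + 2 * s) := by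
      rw [← Real.rpow_natCast (x ^ (1 + s)) 2, ← Real.rpow_mul hx]
      norm_num; ring_nf
    have hx3 : x ^ (3:ℝ) = x ^ (3:ℕ) := by
      rw [show (3:ℝ) = ((3:ℕ):ℝ) by norm_num, Real.rpow_natCast]
    have hexp : (Real.exp (μ * (x - x ^ 3) * t)) ^ 2 ≤ E2 * Real.exp (-b * x ^ (3:ℝ)) := by
      rw [exp_pow_two, hE2_def, ← Real.exp_add, Real.exp_le_exp, hx3, hb_def]
      have h1 := hkey x hx
      nlinarith [mul_pos hμ ht, mul_le_mul_of_nonneg_right h1 (le_of_lt (mul_pos hμ ht))]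
    calc (x ^ (1 + s) * Real.exp (μ * (x - x ^ 3) * t)) ^ 2
        = (x ^ (1 + s)) ^ 2 * (Real.exp (μ * (x - x ^ 3) * t)) ^ 2 := by ring
      _ ≤ (x ^ (1 + s)) ^ 2 * (E2 * Real.exp (-b * x ^ (3:ℝ))) := by
          exact mul_le_mul_of_nonneg_left hexp (sq_nonneg _)
      _ = E2 * F x := by rw [hxp, hF_def]; ring
  -- integrability of the dominating function
  have hDint : Integrable (fun ξ : ℝ => E2 * F |ξ|) :=
    (integrable_comp_abs' hFint).const_mul E2
  -- compare integrals
  have hmono : (∫ ξ : ℝ, (|ξ| ^ (1 + s) * Real.exp (μ * (|ξ| - |ξ| ^ 3) * t)) ^ 2)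
      ≤ ∫ ξ : ℝ, E2 * F |ξ| := by
    refine integral_mono_of_nonneg (Filter.Eventually.of_forall fun ξ => sq_nonneg _)
      hDint (Filter.Eventually.of_forall hpt)
  -- compute the integral of the dominating function
  have hval : (∫ ξ : ℝ, E2 * F |ξ|)
      = E2 * (2 * (b ^ (-(2 + 2 * s + 1) / 3) * (1/3) * Real.Gamma ((2 + 2 * s + 1) / 3))) := by
    rw [integral_const_mul, integral_comp_abs (f := F),
      hF_def, integral_rpow_mul_exp_neg_mul_rpow (by norm_num : (0:ℝ) < 3) (by linarith) hb]
  have hexparg : (2 + 2 * s + 1) = 2 * s + 3 := by ring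
  -- the square of the RHS
  have hT2 : (t ^ (-(2 * s + 3) / 6) : ℝ) ^ 2 = t ^ (-(2 * s + 3) / 3) := by
    rw [← Real.rpow_natCast (t ^ (-(2 * s + 3) / 6)) 2, ← Real.rpow_mul ht.le]
    norm_num
    ring_nf
  have hbr : b ^ (-(2 * s + 3) / 3) = μ ^ (-(2 * s + 3) / 3) * t ^ (-(2 * s + 3) / 3) := by
    rw [hb_def, Real.mul_rpow hμ.le ht.le]
  have hRHS0 : 0 ≤ C * Real.exp (2 * Real.sqrt 2 / Real.sqrt 27 * μ * t)
      * t ^ (-(2 * s + 3) / 6) := by positivity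
  have hsq : (C * Real.exp (2 * Real.sqrt 2 / Real.sqrt 27 * μ * t)
      * t ^ (-(2 * s + 3) / 6)) ^ 2
      = E2 * (2 * (b ^ (-(2 + 2 * s + 1) / 3) * (1/3) * Real.Gamma ((2 + 2 * s + 1) / 3))) := by
    rw [mul_pow, mul_pow, sqrt_half_pow_sq hCin.le, exp_pow_two, hT2, hexparg, hbr, hK, hE2_def]
    ring_nf
  have hmain : (∫ ξ : ℝ, (|ξ| ^ (1 + s) * Real.exp (μ * (|ξ| - |ξ| ^ 3) * t)) ^ 2)
      ≤ (C * Real.exp (2 * Real.sqrt 2 / Real.sqrt 27 * μ * t)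
        * t ^ (-(2 * s + 3) / 6)) ^ 2 := by
    rw [hsq]; rw [hval] at hmono; exact hmono
  have hI0 : 0 ≤ ∫ ξ : ℝ, (|ξ| ^ (1 + s) * Real.exp (μ * (|ξ| - |ξ| ^ 3) * t)) ^ 2 :=
    integral_nonneg fun ξ => sq_nonneg _
  calc (∫ ξ : ℝ, (|ξ| ^ (1 + s) * Real.exp (μ * (|ξ| - |ξ| ^ 3) * t)) ^ 2) ^ (1/2 : ℝ)
      ≤ ((C * Real.exp (2 * Real.sqrt 2 / Real.sqrt 27 * μ * t)
          * t ^ (-(2 * s + 3) / 6)) ^ 2) ^ (1/2 : ℝ) :=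
        Real.rpow_le_rpow hI0 hmain (by norm_num)
    _ = C * Real.exp (2 * Real.sqrt 2 / Real.sqrt 27 * μ * t) * t ^ (-(2 * s + 3) / 6) := by
        rw [← Real.rpow_natCast _ 2, ← Real.rpow_mul hRHS0]
        norm_num
end

section
/- Let b ∈ (0,1) and t > 0. Then for every x ∈ ℝ, the Stein derivative of the function ξ ↦ e^{itξ|ξ|} satisfies 𝒟^b(e^{itξ|ξ|})(x) ≤ C_b (t^{b/2} + t^b |x|^b). -/
open MeasureTheory Set


lemma aux_exp_one (θ : ℝ) : ‖Complex.exp (Complex.I * θ) - 1‖ ≤ 2 * |θ| := by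
  rcases le_or_gt |θ| 1 with h | h
  · have := Complex.norm_exp_sub_one_le (x := Complex.I * θ) (by simpa using h)
    simpa using this
  · calc ‖Complex.exp (Complex.I * θ) - 1‖ ≤ ‖Complex.exp (Complex.I * θ)‖ + ‖(1:ℂ)‖ :=
        norm_sub_le _ _
    _ ≤ 2 := by
        rw [Complex.norm_exp]
        simp
        norm_num
    _ ≤ 2 * |θ| := by nlinarith [abs_nonneg θ]

lemma aux_exp (a c : ℝ) :
    ‖Complex.exp (Complex.I * a) - Complex.exp (Complex.I * c)‖ ≤ 2 * |a - c| := by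
  have h1 : Complex.exp (Complex.I * a) - Complex.exp (Complex.I * c)
      = Complex.exp (Complex.I * c) * (Complex.exp (Complex.I * ((a - c : ℝ) : ℂ)) - 1) := by
    rw [mul_sub, ← Complex.exp_add, mul_one]
    push_cast
    ring_nf
  rw [h1, norm_mul]
  have h2 : ‖Complex.exp (Complex.I * (c:ℂ))‖ = 1 := by
    rw [Complex.norm_exp]; simp
  rw [h2, one_mul]
  exact aux_exp_one (a - c)

lemma aux_exp_two (a c : ℝ) :
    ‖Complex.exp (Complex.I * a) - Complex.exp (Complex.I * c)‖ ≤ 2 := by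
  have h2 : ∀ u : ℝ, ‖Complex.exp (Complex.I * (u:ℂ))‖ = 1 := by
    intro u; rw [Complex.norm_exp]; simp
  calc ‖Complex.exp (Complex.I * a) - Complex.exp (Complex.I * c)‖
      ≤ ‖Complex.exp (Complex.I * (a:ℂ))‖ + ‖Complex.exp (Complex.I * (c:ℂ))‖ := norm_sub_le _ _
  _ ≤ 2 := by rw [h2, h2]; norm_num

lemma aux_absmul (x y : ℝ) : abs (x * |x| - y * |y|) ≤ (|x| + |y|) * |x - y| := by
  rcases abs_cases x with ⟨h1, h1'⟩ | ⟨h1, h1'⟩ <;> rcases abs_cases y with ⟨h2, h2'⟩ | ⟨h2, h2'⟩ <;>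
    rcases abs_cases (x - y) with ⟨h3, h3'⟩ | ⟨h3, h3'⟩ <;>
    rcases abs_cases (x * |x| - y * |y|) with ⟨h4, h4'⟩ | ⟨h4, h4'⟩ <;>
    nlinarith [sq_nonneg (x + y), sq_nonneg (x - y)]

lemma aux_subadd {u v p : ℝ} (hu : 0 ≤ u) (hv : 0 ≤ v) (hp : 0 ≤ p) (hp1 : p ≤ 1) :
    (u + v) ^ p ≤ u ^ p + v ^ p := by
  have h := NNReal.rpow_add_le_add_rpow (u.toNNReal) (v.toNNReal) hp hp1
  have h2 := NNReal.coe_le_coe.2 h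
  push_cast at h2
  rwa [Real.coe_toNNReal u hu, Real.coe_toNNReal v hv] at h2

lemma aux_integrable_comp_abs {F : ℝ → ℝ} (hf : IntegrableOn (fun z => F |z|) (Ioi 0)) :
    Integrable (fun z => F |z|) := by
  have int_Iic : IntegrableOn (fun z ↦ F |z|) (Iic 0) := by
    rw [← Measure.map_neg_eq_self (volume : Measure ℝ)]
    have m : MeasurableEmbedding fun x : ℝ => -x := (Homeomorph.neg ℝ).measurableEmbedding
    rw [m.integrableOn_map_iff]
    simp_rw [Function.comp_def, abs_neg, neg_preimage, neg_Iic, neg_zero]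
    exact (integrableOn_Ici_iff_integrableOn_Ioi (by simp)).mpr hf
  have h := int_Iic.union hf
  rwa [Iic_union_Ioi, integrableOn_univ] at h

noncomputable def steinAux (K ρ b : ℝ) : ℝ → ℝ :=
  fun r => if r ≤ ρ then K ^ 2 * r ^ (1 - 2 * b) else 4 * r ^ (-(1 + 2 * b))

lemma steinAux_integrableOn {K ρ b : ℝ} (hρ : 0 < ρ) (hb0 : 0 < b) (hb1 : b < 1) :
    IntegrableOn (steinAux K ρ b) (Ioi 0) := by
  have hnear : IntegrableOn (steinAux K ρ b) (Ioc 0 ρ) := by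
    have h1 : IntervalIntegrable (fun r : ℝ => r ^ (1 - 2 * b)) volume 0 ρ :=
      intervalIntegral.intervalIntegrable_rpow' (by linarith)
    have h2 : IntervalIntegrable (fun r : ℝ => K ^ 2 * r ^ (1 - 2 * b)) volume 0 ρ :=
      h1.const_mul _
    rw [intervalIntegrable_iff_integrableOn_Ioc_of_le hρ.le] at h2
    exact h2.congr_fun (fun r hr => by simp [steinAux, if_pos hr.2]) measurableSet_Ioc
  have hfar : IntegrableOn (steinAux K ρ b) (Ioi ρ) := by
    have h1 : IntegrableOn (fun r : ℝ => r ^ (-(1 + 2 * b))) (Ioi ρ) :=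
      integrableOn_Ioi_rpow_of_lt (by linarith) hρ
    have h2 : IntegrableOn (fun r : ℝ => 4 * r ^ (-(1 + 2 * b))) (Ioi ρ) := h1.const_mul _
    exact h2.congr_fun (fun r hr => by
      simp only [steinAux, if_neg (not_le.2 (mem_Ioi.1 hr))]) measurableSet_Ioi
  have := hnear.union hfar
  rwa [Ioc_union_Ioi_eq_Ioi hρ.le] at this

lemma steinAux_integral {K ρ b : ℝ} (hρ : 0 < ρ) (hb0 : 0 < b) (hb1 : b < 1) :
    ∫ r in Ioi (0:ℝ), steinAux K ρ b r
      = K ^ 2 * (ρ ^ (2 - 2 * b) / (2 - 2 * b)) + 4 * (ρ ^ (-(2 * b)) / (2 * b)) := by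
  have hnear : IntegrableOn (steinAux K ρ b) (Ioc 0 ρ) :=
    (steinAux_integrableOn hρ hb0 hb1).mono_set Ioc_subset_Ioi_self
  have hfar : IntegrableOn (steinAux K ρ b) (Ioi ρ) :=
    (steinAux_integrableOn hρ hb0 hb1).mono_set (Ioi_subset_Ioi hρ.le)
  rw [← Ioc_union_Ioi_eq_Ioi hρ.le,
    setIntegral_union (Ioc_disjoint_Ioi le_rfl) measurableSet_Ioi hnear hfar]
  have e1 : ∫ r in Ioc (0:ℝ) ρ, steinAux K ρ b r = K ^ 2 * (ρ ^ (2 - 2 * b) / (2 - 2 * b)) := by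
    rw [setIntegral_congr_fun measurableSet_Ioc
      (g := fun r : ℝ => K ^ 2 * r ^ (1 - 2 * b)) (fun r hr => by simp only [steinAux, if_pos hr.2])]
    rw [← intervalIntegral.integral_of_le hρ.le, intervalIntegral.integral_const_mul,
      integral_rpow (Or.inl (by linarith))]
    rw [Real.zero_rpow (by linarith : (1 - 2 * b + 1 : ℝ) ≠ 0), sub_zero,
      show (1 - 2 * b + 1 : ℝ) = 2 - 2 * b from by ring]
  have e2 : ∫ r in Ioi ρ, steinAux K ρ b r = 4 * (ρ ^ (-(2 * b)) / (2 * b)) := by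
    rw [setIntegral_congr_fun measurableSet_Ioi
      (g := fun r : ℝ => 4 * r ^ (-(1 + 2 * b)))
      (fun r hr => by simp only [steinAux, if_neg (not_le.2 (mem_Ioi.1 hr))])]
    rw [integral_const_mul, integral_Ioi_rpow_of_lt (by linarith) hρ]
    have : (-(1 + 2 * b) + 1 : ℝ) = -(2 * b) := by ring
    rw [this]
    rw [neg_div, div_neg, neg_neg]
  rw [e1, e2]
/-- For `b ∈ (0,1)` there is a constant `C_b > 0` such that for every `t > 0` and every
`x ∈ ℝ`, the Stein derivative of the Benjamin–Ono symbol `ξ ↦ e^{itξ|ξ|}` satisfies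
`𝒟^b(e^{itξ|ξ|})(x) ≤ C_b (t^{b/2} + t^b |x|^b)`. -/
theorem stmt16 (b : ℝ) (hb : b ∈ Set.Ioo (0:ℝ) 1) :
    ∃ C : ℝ, 0 < C ∧ ∀ t : ℝ, 0 < t → ∀ x : ℝ,
      (∫ y : ℝ, ‖Complex.exp (Complex.I * ((t * x * |x| : ℝ) : ℂ))
          - Complex.exp (Complex.I * ((t * y * |y| : ℝ) : ℂ))‖ ^ 2
            / |x - y| ^ (1 + 2 * b)) ^ (1/2 : ℝ)
        ≤ C * (t ^ (b/2) + t ^ b * |x| ^ b) := by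
  obtain ⟨hb0, hb1⟩ := hb
  have h1b : (0:ℝ) < 1 - b := by linarith
  set C₁ : ℝ := 36 / (1 - b) + 4 / b with hC₁def
  have hC₁ : 0 < C₁ := by positivity
  refine ⟨C₁ ^ (1/2 : ℝ), Real.rpow_pos_of_pos hC₁ _, ?_⟩
  intro t ht x
  set s : ℝ := t ^ (1/2 : ℝ) with hsdef
  have hs0 : 0 < s := Real.rpow_pos_of_pos ht _
  have hs2 : s ^ 2 = t := by
    rw [hsdef, ← Real.rpow_natCast (t ^ (1/2:ℝ)) 2, ← Real.rpow_mul ht.le]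
    norm_num
  set d : ℝ := s + t * |x| with hddef
  have hd0 : 0 < d := by positivity
  set ρ : ℝ := d⁻¹ with hρdef
  have hρ : 0 < ρ := inv_pos.2 hd0
  set K : ℝ := 2 * t * (2 * |x| + ρ) with hKdef
  have hK0 : 0 < K := by positivity
  -- pointwise bound
  have hfg : ∀ y : ℝ, ‖Complex.exp (Complex.I * ((t * x * |x| : ℝ) : ℂ))
          - Complex.exp (Complex.I * ((t * y * |y| : ℝ) : ℂ))‖ ^ 2
            / |x - y| ^ (1 + 2 * b) ≤ steinAux K ρ b |x - y| := by
    intro y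
    by_cases hxy : x = y
    · subst hxy
      have hL : ‖Complex.exp (Complex.I * ((t * x * |x| : ℝ) : ℂ))
          - Complex.exp (Complex.I * ((t * x * |x| : ℝ) : ℂ))‖ ^ 2
            / |x - x| ^ (1 + 2 * b) = 0 := by
        rw [sub_self, norm_zero]
        norm_num
      rw [hL, sub_self, abs_zero]
      unfold steinAux
      rw [if_pos hρ.le]
      exact mul_nonneg (by positivity) (Real.rpow_nonneg le_rfl _)
    · set r : ℝ := |x - y| with hrdef
      have hr : 0 < r := abs_pos.2 (sub_ne_zero.2 hxy)
      have hrp : 0 < r ^ (1 + 2 * b) := Real.rpow_pos_of_pos hr _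
      by_cases hcase : r ≤ ρ
      · simp only [steinAux, if_pos hcase]
        have hnum : ‖Complex.exp (Complex.I * ((t * x * |x| : ℝ) : ℂ))
            - Complex.exp (Complex.I * ((t * y * |y| : ℝ) : ℂ))‖ ≤ K * r := by
          refine le_trans (aux_exp (t * x * |x|) (t * y * |y|)) ?_
          have e1 : t * x * |x| - t * y * |y| = t * (x * |x| - y * |y|) := by ring
          rw [e1, abs_mul, abs_of_pos ht]
          have e2 := aux_absmul x y
          have e3 : |y| ≤ |x| + r := by
            have h := abs_sub_abs_le_abs_sub y x
            rw [abs_sub_comm] at h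
            linarith
          have h4 : abs (x * |x| - y * |y|) ≤ (2 * |x| + ρ) * r := by
            nlinarith [abs_nonneg (x - y), mul_nonneg (sub_nonneg.2 hcase) hr.le]
          have h5 := mul_le_mul_of_nonneg_left h4 ht.le
          rw [hKdef]
          nlinarith
        rw [div_le_iff₀ hrp]
        have hr2 : r ^ (1 - 2 * b) * r ^ (1 + 2 * b) = r ^ (2:ℕ) := by
          rw [← Real.rpow_add hr, ← Real.rpow_natCast r 2]
          congr 1
          push_cast
          ring
        calc ‖Complex.exp (Complex.I * ((t * x * |x| : ℝ) : ℂ))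
              - Complex.exp (Complex.I * ((t * y * |y| : ℝ) : ℂ))‖ ^ 2
            ≤ (K * r) ^ 2 := by
              apply pow_le_pow_left₀ (norm_nonneg _) hnum
        _ = K ^ 2 * (r ^ (1 - 2 * b) * r ^ (1 + 2 * b)) := by rw [hr2]; ring
        _ = K ^ 2 * r ^ (1 - 2 * b) * r ^ (1 + 2 * b) := by ring
      · simp only [steinAux, if_neg hcase]
        rw [div_le_iff₀ hrp]
        have hr2 : r ^ (-(1 + 2 * b)) * r ^ (1 + 2 * b) = 1 := by
          rw [← Real.rpow_add hr, neg_add_cancel, Real.rpow_zero]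
        calc ‖Complex.exp (Complex.I * ((t * x * |x| : ℝ) : ℂ))
              - Complex.exp (Complex.I * ((t * y * |y| : ℝ) : ℂ))‖ ^ 2
            ≤ 2 ^ 2 := pow_le_pow_left₀ (norm_nonneg _) (aux_exp_two _ _) 2
        _ = 4 * (r ^ (-(1 + 2 * b)) * r ^ (1 + 2 * b)) := by rw [hr2]; norm_num
        _ = 4 * r ^ (-(1 + 2 * b)) * r ^ (1 + 2 * b) := by ring
  -- nonnegativity of the integrand
  have hf0 : ∀ y : ℝ, 0 ≤ ‖Complex.exp (Complex.I * ((t * x * |x| : ℝ) : ℂ))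
          - Complex.exp (Complex.I * ((t * y * |y| : ℝ) : ℂ))‖ ^ 2
            / |x - y| ^ (1 + 2 * b) := by
    intro y
    apply div_nonneg (by positivity) (Real.rpow_nonneg (abs_nonneg _) _)
  -- integrability of the majorant
  have hGabs : Integrable (fun z : ℝ => steinAux K ρ b |z|) := by
    apply aux_integrable_comp_abs
    exact ((steinAux_integrableOn hρ hb0 hb1).congr_fun
      (fun z hz => by rw [abs_of_pos (mem_Ioi.1 hz)]) measurableSet_Ioi)
  have hgint : Integrable (fun y : ℝ => steinAux K ρ b |x - y|) :=
    hGabs.comp_sub_left x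
  -- compare the integrals
  have hmono : (∫ y : ℝ, ‖Complex.exp (Complex.I * ((t * x * |x| : ℝ) : ℂ))
          - Complex.exp (Complex.I * ((t * y * |y| : ℝ) : ℂ))‖ ^ 2
            / |x - y| ^ (1 + 2 * b))
      ≤ ∫ y : ℝ, steinAux K ρ b |x - y| :=
    integral_mono_of_nonneg (Filter.Eventually.of_forall hf0) hgint
      (Filter.Eventually.of_forall hfg)
  have htrans : (∫ y : ℝ, steinAux K ρ b |x - y|) = ∫ z : ℝ, steinAux K ρ b |z| :=
    integral_sub_left_eq_self (fun z : ℝ => steinAux K ρ b |z|) volume x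
  have hcomp : (∫ z : ℝ, steinAux K ρ b |z|) = 2 * ∫ r in Ioi (0:ℝ), steinAux K ρ b r :=
    integral_comp_abs
  -- key bound on K * ρ
  have htxρ : t * |x| * ρ ≤ 1 := by
    have h1 : t * |x| ≤ d := by rw [hddef]; linarith
    calc t * |x| * ρ ≤ d * ρ := mul_le_mul_of_nonneg_right h1 hρ.le
    _ = 1 := by rw [hρdef, mul_inv_cancel₀ hd0.ne']
  have htρ2 : t * ρ ^ 2 ≤ 1 := by
    have hsd : s ≤ d := by rw [hddef]; nlinarith [abs_nonneg x]
    have hρs : ρ ≤ s⁻¹ := by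
      rw [hρdef]
      exact inv_anti₀ hs0 hsd
    calc t * ρ ^ 2 ≤ t * (s⁻¹) ^ 2 :=
          mul_le_mul_of_nonneg_left (pow_le_pow_left₀ hρ.le hρs 2) ht.le
    _ = t * (s ^ 2)⁻¹ := by rw [inv_pow]
    _ = 1 := by rw [hs2, mul_inv_cancel₀ ht.ne']
  have hKρ : K * ρ ≤ 6 := by
    have : K * ρ = 4 * (t * |x| * ρ) + 2 * (t * ρ ^ 2) := by rw [hKdef]; ring
    rw [this]; linarith
  have hK36 : K ^ 2 * ρ ^ (2 - 2 * b) ≤ 36 * ρ ^ (-(2 * b)) := by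
    have hρ2 : ρ ^ (2 - 2 * b) = ρ ^ (2:ℕ) * ρ ^ (-(2 * b)) := by
      rw [← Real.rpow_natCast ρ 2, ← Real.rpow_add hρ]
      congr 1
      all_goals push_cast
      all_goals ring
    rw [hρ2]
    have hP : 0 ≤ ρ ^ (-(2 * b)) := Real.rpow_nonneg hρ.le _
    have h36 : K ^ 2 * ρ ^ (2:ℕ) ≤ 36 := by nlinarith [mul_pos hK0 hρ]
    calc K ^ 2 * (ρ ^ (2:ℕ) * ρ ^ (-(2 * b))) = (K ^ 2 * ρ ^ (2:ℕ)) * ρ ^ (-(2 * b)) := by ring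
    _ ≤ 36 * ρ ^ (-(2 * b)) := mul_le_mul_of_nonneg_right h36 hP
  -- total bound on the integral
  have htotal : (∫ y : ℝ, ‖Complex.exp (Complex.I * ((t * x * |x| : ℝ) : ℂ))
          - Complex.exp (Complex.I * ((t * y * |y| : ℝ) : ℂ))‖ ^ 2
            / |x - y| ^ (1 + 2 * b)) ≤ C₁ * ρ ^ (-(2 * b)) := by
    have hval := steinAux_integral (K := K) hρ hb0 hb1
    have hP : 0 ≤ ρ ^ (-(2 * b)) := Real.rpow_nonneg hρ.le _
    have key : C₁ * ρ ^ (-(2 * b))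
        = 2 * ((36 * ρ ^ (-(2 * b))) / (2 - 2 * b) + 4 * (ρ ^ (-(2 * b)) / (2 * b))) := by
      have hb2 : (2 - 2 * b : ℝ) ≠ 0 := by linarith
      have h1b' : (1 - b : ℝ) ≠ 0 := h1b.ne'
      rw [hC₁def]
      field_simp
    calc (∫ y : ℝ, ‖Complex.exp (Complex.I * ((t * x * |x| : ℝ) : ℂ))
          - Complex.exp (Complex.I * ((t * y * |y| : ℝ) : ℂ))‖ ^ 2
            / |x - y| ^ (1 + 2 * b))
        ≤ ∫ y : ℝ, steinAux K ρ b |x - y| := hmono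
    _ = 2 * (K ^ 2 * (ρ ^ (2 - 2 * b) / (2 - 2 * b)) + 4 * (ρ ^ (-(2 * b)) / (2 * b))) := by
        rw [htrans, hcomp, hval]
    _ ≤ 2 * ((36 * ρ ^ (-(2 * b))) / (2 - 2 * b) + 4 * (ρ ^ (-(2 * b)) / (2 * b))) := by
        have h2b : (0:ℝ) < 2 - 2 * b := by linarith
        have step : K ^ 2 * (ρ ^ (2 - 2 * b) / (2 - 2 * b))
            ≤ (36 * ρ ^ (-(2 * b))) / (2 - 2 * b) := by
          rw [mul_div_assoc']
          exact (div_le_div_iff_of_pos_right h2b).2 hK36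
        linarith
    _ = C₁ * ρ ^ (-(2 * b)) := key.symm
  -- take square roots
  have hInn : 0 ≤ ∫ y : ℝ, ‖Complex.exp (Complex.I * ((t * x * |x| : ℝ) : ℂ))
          - Complex.exp (Complex.I * ((t * y * |y| : ℝ) : ℂ))‖ ^ 2
            / |x - y| ^ (1 + 2 * b) := integral_nonneg hf0
  have hsqrt := Real.rpow_le_rpow hInn htotal (by norm_num : (0:ℝ) ≤ 1/2)
  have hrhs : (C₁ * ρ ^ (-(2 * b))) ^ (1/2:ℝ) = C₁ ^ (1/2:ℝ) * d ^ b := by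
    rw [Real.mul_rpow hC₁.le (Real.rpow_nonneg hρ.le _), ← Real.rpow_mul hρ.le]
    congr 1
    rw [show (-(2 * b) * (1/2) : ℝ) = -b by ring, hρdef, ← Real.rpow_neg_one d,
      ← Real.rpow_mul hd0.le]
    norm_num
  have hsub : d ^ b ≤ t ^ (b/2) + t ^ b * |x| ^ b := by
    have h := aux_subadd hs0.le (by positivity : (0:ℝ) ≤ t * |x|) hb0.le hb1.le
    rw [hddef]
    calc (s + t * |x|) ^ b ≤ s ^ b + (t * |x|) ^ b := h
    _ = t ^ (b/2) + t ^ b * |x| ^ b := by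
        rw [hsdef, ← Real.rpow_mul ht.le, show ((1:ℝ)/2 * b) = b/2 by ring,
          Real.mul_rpow ht.le (abs_nonneg x)]
  calc (∫ y : ℝ, ‖Complex.exp (Complex.I * ((t * x * |x| : ℝ) : ℂ))
          - Complex.exp (Complex.I * ((t * y * |y| : ℝ) : ℂ))‖ ^ 2
            / |x - y| ^ (1 + 2 * b)) ^ (1/2:ℝ)
      ≤ (C₁ * ρ ^ (-(2 * b))) ^ (1/2:ℝ) := hsqrt
  _ = C₁ ^ (1/2:ℝ) * d ^ b := hrhs
  _ ≤ C₁ ^ (1/2:ℝ) * (t ^ (b/2) + t ^ b * |x| ^ b) :=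
      mul_le_mul_of_nonneg_left hsub (Real.rpow_nonneg hC₁.le _)
end
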